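/- Corollary A′: suppose f on a finite product space satisfies the covering bound: the set {∇f(x,·) : x ∈ ∏Kᵢ} can be covered by at most e^{εn} sets of sup-norm diameter < δn. Then there exist a partition 𝒫 of ∏ᵢKᵢ with |𝒫| ≤ e^{εn} and additively separable functions g_P for P ∈ 𝒫 such that Σ_P μ(P)·D(μ|_P ‖ ξ_{g_P}) < (ε+δ)n, where μ is the Gibbs measure of f and ξ_{g_P} is the product Gibbs measure of g_P. -/

import Mathlib

open Real Finset

/-- A probability mass function on a finite type. -/
def IsPMF {α : Type*} [Fintype α] (μ : α → ℝ) : Prop :=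
  (∀ x, 0 ≤ μ x) ∧ ∑ x, μ x = 1

/-- Kullback–Leibler divergence. -/
noncomputable def KL {α : Type*} [Fintype α] (μ γ : α → ℝ) : ℝ :=
  ∑ x, μ x * Real.log (μ x / γ x)

/-- The Gibbs measure of the potential `f` relative to the reference measure `l`. -/
noncomputable def gibbs {α : Type*} [Fintype α] (f : α → ℝ) (l : α → ℝ) : α → ℝ :=
  fun x => Real.exp (f x) * l x / ∑ y, Real.exp (f y) * l y

/-- Product of the measures `l i` on the product space. -/
noncomputable def prodMeas {n : ℕ} {K : Fin n → Type*} [∀ i, Fintype (K i)]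
    (l : ∀ i, K i → ℝ) : (∀ i, K i) → ℝ :=
  fun x => ∏ i, l i (x i)

/-- Discrete partial derivative `∂ᵢf(x,y)` with reference points `star`. -/
noncomputable def dpart {n : ℕ} {K : Fin n → Type*} (f : (∀ i, K i) → ℝ)
    (star : ∀ i, K i) (i : Fin n) (x : ∀ j, K j) (y : K i) : ℝ :=
  f (Function.update x i y) - f (Function.update x i (star i))

/-- Discrete gradient `∇f(x,y) = Σᵢ ∂ᵢf(x,yᵢ)` with reference points `star`. -/
noncomputable def dgrad {n : ℕ} {K : Fin n → Type*} (f : (∀ i, K i) → ℝ)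
    (star : ∀ i, K i) (x y : ∀ i, K i) : ℝ :=
  ∑ i, dpart f star i x (y i)

/-- The product Gibbs measure `ξ_{∇f(x,·)} = ∏ᵢ ξ_{∂ᵢf(x,·)}` of the additively
separable potential `∇f(x,·)`. -/
noncomputable def xiGrad {n : ℕ} {K : Fin n → Type*} [∀ i, Fintype (K i)]
    (f : (∀ i, K i) → ℝ) (star : ∀ i, K i) (l : ∀ i, K i → ℝ) (x : ∀ i, K i) :
    (∀ i, K i) → ℝ :=
  fun y => ∏ i, gibbs (dpart f star i x) (l i) (y i)

/-- Mass of the cell labelled `j` of the partition given by the labelling `c`. -/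
noncomputable def cellMass {α : Type*} [Fintype α] {I : Type*} [Fintype I] [DecidableEq I]
    (μ : α → ℝ) (c : α → I) (j : I) : ℝ :=
  ∑ x, if c x = j then μ x else 0

/-- The measure `μ` conditioned on the cell labelled `j`. -/
noncomputable def condMeas {α : Type*} [Fintype α] {I : Type*} [Fintype I] [DecidableEq I]
    (μ : α → ℝ) (c : α → I) (j : I) : α → ℝ :=
  fun x => if c x = j then μ x / cellMass μ c j else 0

/-- Shannon entropy of the partition given by the labelling `c`, under `μ`. -/
noncomputable def partEnt {α : Type*} [Fintype α] {I : Type*} [Fintype I] [DecidableEq I]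
    (μ : α → ℝ) (c : α → I) : ℝ :=
  -∑ j, cellMass μ c j * Real.log (cellMass μ c j)

/-!
Label each point `x` by a covering set containing `∇f(x,·)`, and compare `μ` conditioned on a
cell `P` with `ξ_{∇f(x,·)}` for a center `x` drawn from `μ|_P`. Since
`ξ_{∇f(x,·)} = e^{∇f(x,·)} λ / W(x)`, averaging over the center cancels the normalizers `log W(x)`,
and the diameter bound costs at most `δn`; so some center achieves
`∑_P μ(P) D(μ|_P ‖ ξ_P) ≤ E_μ log (μ(x) / ξ_{∇f(x,·)}(x)) + δn + H(𝒫)`.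
As `ξ_{∇f(x,·)}(x) = ∏ᵢ μ(xᵢ | x₋ᵢ)`, the first term is `∑ᵢ H(Xᵢ | X₋ᵢ) - H(X) ≤ 0` by Han's
inequality, and `H(𝒫) ≤ log |𝒫| ≤ εn`.
-/

open Function

lemma mul_log_div_le_sub {p t : ℝ} (hp : 0 < p) (ht : 0 < t) : p * log (t / p) ≤ t - p := by
  have := mul_le_mul_of_nonneg_left (log_le_sub_one_of_pos (div_pos ht hp)) hp.le
  rwa [mul_sub, mul_div_cancel₀ _ hp.ne', mul_one] at this

section Han

variable {ι : Type*} [Fintype ι] [DecidableEq ι] {K : ι → Type*} [∀ i, Fintype (K i)]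

def fiber (S : Finset ι) (x : ∀ i, K i) : Finset (∀ i, K i) :=
  Fintype.piFinset fun j => if j ∈ S then univ else {x j}

lemma mem_fiber {S : Finset ι} {x y : ∀ i, K i} : y ∈ fiber S x ↔ ∀ j ∉ S, y j = x j := by
  simp only [fiber, Fintype.mem_piFinset]
  refine forall_congr' fun j => ?_
  split_ifs with hj <;> simp [hj]

noncomputable def fiberSum (μ : (∀ i, K i) → ℝ) (S : Finset ι) (x : ∀ i, K i) : ℝ :=
  ∑ y ∈ fiber S x, μ y

variable {μ : (∀ i, K i) → ℝ}

lemma fiberSum_empty (μ : (∀ i, K i) → ℝ) (x : ∀ i, K i) : fiberSum μ ∅ x = μ x := by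
  simp [fiberSum, fiber]

lemma fiberSum_univ (μ : (∀ i, K i) → ℝ) (x : ∀ i, K i) : fiberSum μ univ x = ∑ y, μ y := by
  simp [fiberSum, fiber]

lemma fiberSum_pos (hμ : ∀ x, 0 < μ x) (S : Finset ι) (x : ∀ i, K i) : 0 < fiberSum μ S x :=
  sum_pos (fun y _ => hμ y) ⟨x, mem_fiber.2 fun _ _ => rfl⟩

lemma fiberSum_update_of_mem {S : Finset ι} {i : ι} (hi : i ∈ S) (x : ∀ i, K i) (v : K i) :
    fiberSum μ S (update x i v) = fiberSum μ S x := by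
  unfold fiberSum fiber
  congr 2 with j
  split_ifs with hj
  · rfl
  · rw [update_of_ne (ne_of_mem_of_not_mem hi hj).symm]

lemma fiberSum_insert {S : Finset ι} {i : ι} (hi : i ∉ S) (x : ∀ i, K i) :
    fiberSum μ (insert i S) x = ∑ v, fiberSum μ S (update x i v) := by
  classical
  rw [fiberSum, ← sum_fiberwise _ (fun y => y i)]
  refine sum_congr rfl fun v _ => sum_congr ?_ fun _ _ => rfl
  ext y
  rw [mem_filter, mem_fiber, mem_fiber]
  simp only [mem_insert, not_or]
  constructor
  · rintro ⟨h, rfl⟩ j hj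
    by_cases hji : j = i
    · subst hji; simp
    · simpa [hji] using h j ⟨hji, hj⟩
  · intro h
    exact ⟨fun j ⟨hji, hj⟩ => by simpa [hji] using h j hj, by simpa using h i hi⟩

lemma fiberSum_singleton (μ : (∀ i, K i) → ℝ) (i : ι) (x : ∀ i, K i) :
    fiberSum μ {i} x = ∑ v, μ (update x i v) := by
  simp only [← insert_empty, fiberSum_insert (notMem_empty i), fiberSum_empty]

lemma sum_fiberSum_singleton_mul_div (hμ : ∀ x, 0 < μ x) {S : Finset ι} {i : ι} (hi : i ∉ S) :
    ∑ x, fiberSum μ {i} x * fiberSum μ S x / fiberSum μ (insert i S) x = ∑ x, μ x := by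
  have hswap : ∑ x, ∑ v, μ (update x i v) * (fiberSum μ S x / fiberSum μ (insert i S) x)
      = ∑ x, ∑ v, μ x * (fiberSum μ S (update x i v) / fiberSum μ (insert i S) x) := by
    simp only [← Fintype.sum_prod_type']
    -- the involution `(x, v) ↦ (update x i v, x i)` swaps the roles of `x i` and `v`
    have hinv : Involutive fun p : (∀ i, K i) × K i => (update p.1 i p.2, p.1 i) := by
      intro p
      simp
    refine Fintype.sum_bijective _ hinv.bijective _ _ fun p => ?_
    simp [fiberSum_update_of_mem (mem_insert_self i S)]
  calc ∑ x, fiberSum μ {i} x * fiberSum μ S x / fiberSum μ (insert i S) x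
      = ∑ x, ∑ v, μ (update x i v) * (fiberSum μ S x / fiberSum μ (insert i S) x) := by
        simp only [fiberSum_singleton, sum_mul, sum_div, mul_div_assoc]
    _ = ∑ x, μ x * ((∑ v, fiberSum μ S (update x i v)) / fiberSum μ (insert i S) x) := by
        simp only [hswap, ← mul_sum, sum_div]
    _ = ∑ x, μ x := by
        refine sum_congr rfl fun x _ => ?_
        rw [← fiberSum_insert hi, div_self (fiberSum_pos hμ _ x).ne', mul_one]

/-- For a probability vector `μ`, this is the conditional entropy `H(X_S | X_{Sᶜ})`. -/
noncomputable def condEnt (μ : (∀ i, K i) → ℝ) (S : Finset ι) : ℝ :=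
  ∑ x, μ x * log (fiberSum μ S x / μ x)

lemma condEnt_empty (μ : (∀ i, K i) → ℝ) : condEnt μ ∅ = 0 := by
  refine sum_eq_zero fun x _ => ?_
  rcases eq_or_ne (μ x) 0 with h | h <;> simp [fiberSum_empty, h]

lemma condEnt_singleton_add_le (hμ : ∀ x, 0 < μ x) {S : Finset ι} {i : ι} (hi : i ∉ S) :
    condEnt μ {i} + condEnt μ S ≤ condEnt μ (insert i S) := by
  have key : ∀ {a b c p : ℝ}, 0 < a → 0 < b → 0 < c → 0 < p →
      p * log (a / p) + p * log (b / p) - p * log (c / p) ≤ a * b / c - p := by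
    intro a b c p ha hb hc hp
    calc _ = p * log (a * b / c / p) := by
          rw [log_div (div_pos (mul_pos ha hb) hc).ne' hp.ne', log_div (mul_pos ha hb).ne' hc.ne',
            log_mul ha.ne' hb.ne', log_div ha.ne' hp.ne', log_div hb.ne' hp.ne',
            log_div hc.ne' hp.ne']
          ring
      _ ≤ _ := mul_log_div_le_sub hp (by positivity)
  have := sum_le_sum fun x (_ : x ∈ univ) =>
    key (fiberSum_pos hμ {i} x) (fiberSum_pos hμ S x) (fiberSum_pos hμ (insert i S) x) (hμ x)
  simp only [sum_sub_distrib, sum_add_distrib] at this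
  rw [sum_fiberSum_singleton_mul_div hμ hi, sub_self] at this
  unfold condEnt
  linarith

lemma sum_condEnt_singleton_le (hμ : ∀ x, 0 < μ x) (S : Finset ι) :
    ∑ i ∈ S, condEnt μ {i} ≤ condEnt μ S := by
  induction S using Finset.induction_on with
  | empty => simp [condEnt_empty]
  | insert i S hi ih =>
    rw [sum_insert hi]
    linarith [condEnt_singleton_add_le hμ hi]

noncomputable def condProb (μ : (∀ i, K i) → ℝ) (i : ι) (x : ∀ i, K i) : ℝ :=
  μ x / ∑ v, μ (update x i v)

/-- Han's inequality `∑ᵢ H(Xᵢ | X₋ᵢ) ≤ H(X)`, written as `E log (μ / ∏ᵢ μ(xᵢ | x₋ᵢ)) ≤ 0`. -/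
theorem sum_mul_log_div_prod_condProb_nonpos (hμ : ∀ x, 0 < μ x) (hμ1 : ∑ x, μ x = 1) :
    ∑ x, μ x * log (μ x / ∏ i, condProb μ i x) ≤ 0 := by
  have hpt : ∀ x, μ x * log (μ x / ∏ i, condProb μ i x)
      = ∑ i, μ x * log (fiberSum μ {i} x / μ x) - μ x * log (fiberSum μ univ x / μ x) := by
    intro x
    have hU := fiberSum_pos hμ
    simp only [condProb, ← fiberSum_singleton, fiberSum_univ, hμ1]
    rw [log_div (hμ x).ne' (prod_pos fun i _ => div_pos (hμ x) (hU _ x)).ne',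
      log_prod fun i _ => (div_pos (hμ x) (hU _ x)).ne', one_div, log_inv, ← mul_sum]
    simp only [log_div (hμ x).ne' (hU _ x).ne', log_div (hU _ x).ne' (hμ x).ne', sum_sub_distrib]
    ring
  have han := sum_condEnt_singleton_le hμ univ
  simp only [condEnt] at han
  rw [sum_congr rfl fun x _ => hpt x, sum_sub_distrib, sum_comm]
  linarith

end Han

section Cells

variable {α : Type*} [Fintype α] {I : Type*} [Fintype I] [DecidableEq I] {μ : α → ℝ} {c : α → I}

lemma cellMass_eq_sum_filter (μ : α → ℝ) (c : α → I) (j : I) :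
    cellMass μ c j = ∑ x with c x = j, μ x :=
  (sum_filter _ _).symm

lemma sum_cellMass (μ : α → ℝ) (c : α → I) : ∑ j, cellMass μ c j = ∑ x, μ x := by
  simp only [cellMass_eq_sum_filter, sum_fiberwise]

lemma partEnt_le_log_card (hμ : ∀ x, 0 ≤ μ x) (hμ1 : ∑ x, μ x = 1) :
    partEnt μ c ≤ log (Fintype.card I) := by
  rcases isEmpty_or_nonempty I with hI | hI
  · simp [partEnt]
  have hm : (0 : ℝ) < Fintype.card I := by exact_mod_cast Fintype.card_pos
  have hjensen := concaveOn_negMulLog.le_map_sum (t := univ) (w := fun _ => (Fintype.card I : ℝ)⁻¹)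
    (p := cellMass μ c) (fun _ _ => by positivity) (by simp [hm.ne'])
    (fun j _ => Set.mem_Ici.2 (sum_nonneg fun x _ => by split_ifs <;> simp [hμ x]))
  simp only [smul_eq_mul, ← mul_sum, sum_cellMass, hμ1, mul_one, negMulLog, log_inv] at hjensen
  rw [partEnt, ← sum_neg_distrib]
  have : ∑ j, -cellMass μ c j * log (cellMass μ c j) ≤ log (Fintype.card I) := by
    rw [← mul_le_mul_iff_of_pos_left (inv_pos.2 hm)]
    linarith
  simpa only [neg_mul] using this

lemma cellMass_mul_KL_condMeas {γ : α → ℝ} {j : I} (hM : cellMass μ c j ≠ 0)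
    (hγ : ∀ y, c y = j → γ y ≠ 0) :
    cellMass μ c j * KL (condMeas μ c j) γ
      = ∑ y with c y = j, μ y * log (μ y / γ y) - cellMass μ c j * log (cellMass μ c j) := by
  calc cellMass μ c j * KL (condMeas μ c j) γ
      = ∑ y with c y = j, (μ y * log (μ y / γ y) - μ y * log (cellMass μ c j)) := by
        rw [KL, mul_sum, sum_filter]
        refine sum_congr rfl fun y _ => ?_
        simp only [condMeas]
        split_ifs with hy
        · rcases eq_or_ne (μ y) 0 with h | h
          · simp [h]
          rw [div_right_comm, log_div (div_ne_zero h (hγ y hy)) hM]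
          field_simp
        · simp
    _ = _ := by rw [sum_sub_distrib, ← sum_mul, ← cellMass_eq_sum_filter μ]

end Cells

section Gibbs

variable {α : Type*} [Fintype α] {ρ : α → ℝ}

lemma gibbs_pos [Nonempty α] (hρ : ∀ x, 0 < ρ x) (h : α → ℝ) (x : α) : 0 < gibbs h ρ x :=
  div_pos (mul_pos (exp_pos _) (hρ x))
    (sum_pos (fun y _ => mul_pos (exp_pos _) (hρ y)) univ_nonempty)

lemma sum_gibbs [Nonempty α] (hρ : ∀ x, 0 < ρ x) (h : α → ℝ) : ∑ x, gibbs h ρ x = 1 := by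
  simp only [gibbs]
  rw [← sum_div, div_self (sum_pos (fun y _ => mul_pos (exp_pos _) (hρ y)) univ_nonempty).ne']

lemma log_gibbs [Nonempty α] (hρ : ∀ x, 0 < ρ x) (h : α → ℝ) (x : α) :
    log (gibbs h ρ x) = h x + log (ρ x) - log (∑ y, exp (h y) * ρ y) := by
  rw [gibbs, log_div (mul_pos (exp_pos _) (hρ x)).ne'
      (sum_pos (fun y _ => mul_pos (exp_pos _) (hρ y)) univ_nonempty).ne',
    log_mul (exp_pos _).ne' (hρ x).ne', log_exp]

lemma gibbs_sub_const (h : α → ℝ) (ρ : α → ℝ) (a : ℝ) :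
    gibbs (fun x => h x - a) ρ = gibbs h ρ := by
  funext x
  simp only [gibbs, exp_sub, div_mul_eq_mul_div, ← sum_div]
  rw [div_div_div_cancel_right₀ (exp_pos a).ne']

lemma exists_mem_sum_mul_log_div_gibbs_le (hρ : ∀ x, 0 < ρ x) {P : Finset α} (hP : P.Nonempty)
    {p : α → ℝ} (hp : ∀ y ∈ P, 0 < p y) {g : α → α → ℝ} {D : ℝ}
    (hD : ∀ x ∈ P, ∀ y ∈ P, g y y - g x y ≤ D) :
    ∃ x ∈ P, ∑ y ∈ P, p y * log (p y / gibbs (g x) ρ y)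
      ≤ ∑ y ∈ P, p y * (log (p y / gibbs (g y) ρ y) + D) := by
  have : Nonempty α := ⟨hP.choose⟩
  set W : α → ℝ := fun x => log (∑ z, exp (g x z) * ρ z)
  have hlog : ∀ x ∈ P, ∀ y ∈ P, log (p y / gibbs (g x) ρ y)
      ≤ log (p y / gibbs (g y) ρ y) + D + (W x - W y) := by
    intro x hx y hy
    rw [log_div (hp y hy).ne' (gibbs_pos hρ _ y).ne', log_div (hp y hy).ne' (gibbs_pos hρ _ y).ne',
      log_gibbs hρ, log_gibbs hρ]
    linarith [hD x hx y hy]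
  have hcancel : ∑ x ∈ P, p x * ∑ y ∈ P, p y * (W x - W y) = 0 := by
    simp only [mul_sum]
    have hswap := sum_comm (s := P) (t := P) (f := fun x y => p x * (p y * (W x - W y)))
    have hneg : ∑ y ∈ P, ∑ x ∈ P, p x * (p y * (W x - W y))
        = -∑ x ∈ P, ∑ y ∈ P, p x * (p y * (W x - W y)) := by
      rw [← sum_neg_distrib]
      refine sum_congr rfl fun y _ => ?_
      rw [← sum_neg_distrib]
      exact sum_congr rfl fun x _ => by ring
    linarith
  have havg : ∑ x ∈ P, p x * ∑ y ∈ P, p y * log (p y / gibbs (g x) ρ y)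
      ≤ ∑ x ∈ P, p x * ∑ y ∈ P, p y * (log (p y / gibbs (g y) ρ y) + D) := by
    calc _ ≤ ∑ x ∈ P, p x * ∑ y ∈ P, p y * (log (p y / gibbs (g y) ρ y) + D + (W x - W y)) := by
          gcongr with x hx y hy
          · exact (hp x hx).le
          · exact (hp y hy).le
          · exact hlog x hx y hy
      _ = _ := by
          simp only [mul_add, sum_add_distrib, hcancel, add_zero]
  obtain ⟨x, hx, hle⟩ := exists_le_of_sum_le hP havg
  exact ⟨x, hx, le_of_mul_le_mul_left hle (hp x hx)⟩

end Gibbs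

section Product

variable {n : ℕ} {K : Fin n → Type*} [∀ i, Fintype (K i)]

lemma prod_gibbs_apply (h l : ∀ i, K i → ℝ) (y : ∀ i, K i) :
    ∏ i, gibbs (h i) (l i) (y i) = gibbs (fun z => ∑ i, h i (z i)) (prodMeas l) y := by
  simp only [gibbs, prodMeas, prod_div_distrib, prod_mul_distrib, exp_sum, Fintype.prod_sum]

lemma xiGrad_eq_gibbs (f : (∀ i, K i) → ℝ) (star : ∀ i, K i) (l : ∀ i, K i → ℝ)
    (x : ∀ i, K i) : xiGrad f star l x = gibbs (dgrad f star x) (prodMeas l) :=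
  funext (prod_gibbs_apply _ l)

lemma prodMeas_update (l : ∀ i, K i → ℝ) (x : ∀ i, K i) (i : Fin n) (v : K i) :
    prodMeas l (update x i v) = l i v * ∏ k ∈ univ \ {i}, l k (x k) := by
  simp only [prodMeas, apply_update (fun k => l k), prod_update_of_mem (mem_univ i)]

lemma gibbs_dpart_apply_self {l : ∀ i, K i → ℝ} (hl : ∀ i u, 0 < l i u)
    (f : (∀ i, K i) → ℝ) (star : ∀ i, K i) (i : Fin n) (x : ∀ i, K i) :
    gibbs (dpart f star i x) (l i) (x i) = condProb (gibbs f (prodMeas l)) i x := by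
  have hR : 0 < ∏ k ∈ univ \ {i}, l k (x k) := prod_pos fun k _ => hl k (x k)
  have hx : prodMeas l x = l i (x i) * ∏ k ∈ univ \ {i}, l k (x k) := by
    simpa using prodMeas_update l x i (x i)
  have hZ : 0 < ∑ y, exp (f y) * prodMeas l y :=
    sum_pos (fun y _ => mul_pos (exp_pos _) (prod_pos fun k _ => hl k (y k))) ⟨x, mem_univ x⟩
  change gibbs (fun u => f (update x i u) - f (update x i (star i))) (l i) (x i) = _
  rw [gibbs_sub_const (fun u => f (update x i u)), condProb]
  simp only [gibbs, ← sum_div]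
  rw [div_div_div_cancel_right₀ hZ.ne']
  simp only [prodMeas_update, hx, update_eq_self, ← mul_assoc, ← sum_mul]
  rw [mul_div_mul_right _ _ hR.ne']

lemma xiGrad_self {l : ∀ i, K i → ℝ} (hl : ∀ i u, 0 < l i u) (f : (∀ i, K i) → ℝ)
    (star : ∀ i, K i) (x : ∀ i, K i) :
    xiGrad f star l x x = ∏ i, condProb (gibbs f (prodMeas l)) i x :=
  prod_congr rfl fun i _ => gibbs_dpart_apply_self hl f star i x

end Product

lemma exists_cellMass_mul_KL_gibbs_le {α : Type*} [Fintype α] [Nonempty α] {I : Type*} [Fintype I]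
    [DecidableEq I] {μ ρ : α → ℝ} (hμ : ∀ x, 0 < μ x) (hρ : ∀ x, 0 < ρ x) {c : α → I}
    {g : α → α → ℝ} {D : ℝ} (hD : ∀ x y, c x = c y → g y y - g x y ≤ D) (j : I) :
    ∃ x, cellMass μ c j * KL (condMeas μ c j) (gibbs (g x) ρ)
      ≤ ∑ y with c y = j, μ y * (log (μ y / gibbs (g y) ρ y) + D)
        - cellMass μ c j * log (cellMass μ c j) := by
  rcases (univ.filter (c · = j)).eq_empty_or_nonempty with hP | hP
  · exact ⟨Classical.arbitrary α, by simp [cellMass_eq_sum_filter, hP]⟩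
  obtain ⟨x, -, hx⟩ := exists_mem_sum_mul_log_div_gibbs_le hρ hP (fun y _ => hμ y)
    fun x hx y hy => hD x y ((mem_filter.1 hx).2.trans (mem_filter.1 hy).2.symm)
  have hM : cellMass μ c j ≠ 0 :=
    (cellMass_eq_sum_filter μ c j ▸ sum_pos (fun y _ => hμ y) hP).ne'
  refine ⟨x, ?_⟩
  rw [cellMass_mul_KL_condMeas hM fun y _ => (gibbs_pos hρ _ y).ne']
  linarith

theorem corollaryA'_general {n : ℕ} (K : Fin n → Type*)
    [∀ i, Fintype (K i)] [∀ i, Nonempty (K i)]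
    (l : ∀ i, K i → ℝ) (hlpos : ∀ i x, 0 < l i x)
    (star : ∀ i, K i) (f : (∀ i, K i) → ℝ)
    (ε δ : ℝ)
    (hcov : ∃ (m : ℕ) (C : Fin m → Set ((∀ i, K i) → ℝ)),
      (m : ℝ) ≤ Real.exp (ε * n) ∧
      (∀ x : ∀ i, K i, ∃ j, dgrad f star x ∈ C j) ∧
      ∀ j, ∀ g ∈ C j, ∀ h ∈ C j, ∀ z, |g z - h z| < δ * n)
    (μ : (∀ i, K i) → ℝ) (hμ : μ = gibbs f (prodMeas l)) :
    ∃ (m : ℕ) (c : (∀ i, K i) → Fin m) (g : Fin m → ∀ i, K i → ℝ),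
      (m : ℝ) ≤ Real.exp (ε * n) ∧
      (∑ j, cellMass μ c j *
          KL (condMeas μ c j) (fun z => ∏ i, gibbs (g j i) (l i) (z i)))
        < (ε + δ) * n := by
  obtain ⟨m, C, hm, hcover, hdiam⟩ := hcov
  choose c hc using hcover
  have hρ : ∀ x, 0 < prodMeas l x := fun x => prod_pos fun i _ => hlpos i (x i)
  have hμpos : ∀ x, 0 < μ x := hμ ▸ gibbs_pos hρ f
  have hμ1 : ∑ x, μ x = 1 := hμ ▸ sum_gibbs hρ f
  obtain ⟨x₀⟩ : Nonempty (∀ i, K i) := inferInstance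
  obtain ⟨⟨x, y⟩, hxy, hmax⟩ := Set.exists_max_image {p : (∀ i, K i) × (∀ i, K i) | c p.1 = c p.2}
    (fun p => dgrad f star p.2 p.2 - dgrad f star p.1 p.2) (Set.toFinite _) ⟨(x₀, x₀), rfl⟩
  obtain ⟨D, hDlt, hD⟩ : ∃ D < δ * n, ∀ x' y', c x' = c y' →
      dgrad f star y' y' - dgrad f star x' y' ≤ D :=
    ⟨_, (le_abs_self _).trans_lt (hdiam (c y) _ (hc y) _ (hxy ▸ hc x) y),
      fun x' y' h => hmax (x', y') h⟩
  choose ctr hctr using exists_cellMass_mul_KL_gibbs_le hμpos hρ hD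
  refine ⟨m, c, fun j i => dpart f star i (ctr j), hm, ?_⟩
  have hm0 : (0 : ℝ) < m := Nat.cast_pos.2 (c x₀).pos
  have hHan : ∑ y, μ y * log (μ y / xiGrad f star l y y) ≤ 0 := by
    simpa only [xiGrad_self hlpos, hμ] using sum_mul_log_div_prod_condProb_nonpos hμpos hμ1
  have hEnt : partEnt μ c ≤ log m := by
    simpa using partEnt_le_log_card (c := c) (fun x => (hμpos x).le) hμ1
  calc ∑ j, cellMass μ c j * KL (condMeas μ c j) (xiGrad f star l (ctr j))
      ≤ ∑ j, (∑ y with c y = j, μ y * (log (μ y / xiGrad f star l y y) + D)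
        - cellMass μ c j * log (cellMass μ c j)) := by
        simpa only [xiGrad_eq_gibbs] using sum_le_sum fun j _ => hctr j
    _ = ∑ y, μ y * log (μ y / xiGrad f star l y y) + D + partEnt μ c := by
        rw [sum_sub_distrib, sum_fiberwise, partEnt]
        simp only [mul_add, sum_add_distrib, ← sum_mul, hμ1]
        ring
    _ < (ε + δ) * n := by
        have := (log_le_iff_le_exp hm0).2 hm
        linarith

/-- Corollary A′: if the set of discrete gradients of `f` can be covered by at most
`e^{εn}` sets of sup-norm diameter `< δn`, then there is a partition of the product
space into at most `e^{εn}` cells and additively separable functions `g_P`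
(given by families `gᵢ : Kᵢ → ℝ`) with
`Σ_P μ(P) D(μ|_P ‖ ξ_{g_P}) < (ε+δ)n`. -/
theorem corollaryA' {n : ℕ} (hn : 0 < n) (K : Fin n → Type*)
    [∀ i, Fintype (K i)] [∀ i, Nonempty (K i)]
    (l : ∀ i, K i → ℝ) (hl : ∀ i, IsPMF (l i)) (hlpos : ∀ i x, 0 < l i x)
    (star : ∀ i, K i) (f : (∀ i, K i) → ℝ)
    (ε δ : ℝ) (hε : 0 < ε) (hδ : 0 < δ)
    (hcov : ∃ (m : ℕ) (C : Fin m → Set ((∀ i, K i) → ℝ)),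
      (m : ℝ) ≤ Real.exp (ε * n) ∧
      (∀ x : ∀ i, K i, ∃ j, dgrad f star x ∈ C j) ∧
      ∀ j, ∀ g ∈ C j, ∀ h ∈ C j, ∀ z, |g z - h z| < δ * n)
    (μ : (∀ i, K i) → ℝ) (hμ : μ = gibbs f (prodMeas l)) :
    ∃ (m : ℕ) (c : (∀ i, K i) → Fin m) (g : Fin m → ∀ i, K i → ℝ),
      (m : ℝ) ≤ Real.exp (ε * n) ∧
      (∑ j, cellMass μ c j *
          KL (condMeas μ c j) (fun z => ∏ i, gibbs (g j i) (l i) (z i)))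
        < (ε + δ) * n :=
  corollaryA'_general K l hlpos star f ε δ hcov μ hμ
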